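/- The multiplicative guessing leakage GL_m(X → U) = H_G(X) / H_G(X|U) satisfies 1 ≤ GL_m(X → U) ≤ (n+1)/2 for finite random variables X (on an alphabet of size n) and U. -/

import Mathlib

noncomputable def HG {n : ℕ} (p : Fin n → ℝ) : ℝ :=
  Finset.univ.inf' Finset.univ_nonempty
    (fun r : Equiv.Perm (Fin n) => ∑ i, (((r i : ℕ) : ℝ) + 1) * p i)

/-!
`HG` is a minimum of linear functionals of `p`, each of which is at least `∑ i, p i` on
nonnegative `p`. Hence `HG` is at least `1` on the simplex and concave, so that
`H_G(X|U) ≤ H_G(X)` and `1 ≤ H_G(X|U)`. Guessing in increasing and in decreasing order costs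
`n + 1` in total, so `H_G(X) ≤ (n + 1) / 2`.
-/

open Finset

lemma HG_le_sum {n : ℕ} (p : Fin n → ℝ) (r : Equiv.Perm (Fin n)) :
    HG p ≤ ∑ i, (((r i : ℕ) : ℝ) + 1) * p i :=
  inf'_le _ (mem_univ r)

lemma one_le_HG {n : ℕ} {p : Fin n → ℝ} (h0 : ∀ i, 0 ≤ p i) (h1 : ∑ i, p i = 1) :
    1 ≤ HG p := by
  refine le_inf' _ _ fun r _ => h1 ▸ sum_le_sum fun i _ => ?_
  nlinarith [h0 i, Nat.cast_nonneg (α := ℝ) ((r i : Fin n) : ℕ)]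

lemma HG_le_card_add_one_div_two {n : ℕ} {p : Fin n → ℝ} (h1 : ∑ i, p i = 1) :
    HG p ≤ ((n : ℝ) + 1) / 2 := by
  have hrev (i : Fin n) : ((i : ℕ) : ℝ) + 1 + (((Fin.rev i : ℕ) : ℝ) + 1) = n + 1 := by
    have := i.is_lt
    exact_mod_cast (show (i : ℕ) + 1 + ((Fin.rev i : ℕ) + 1) = n + 1 by rw [Fin.val_rev]; omega)
  have hsum : ∑ i, ((((Equiv.refl (Fin n) i : Fin n) : ℕ) : ℝ) + 1) * p i
      + ∑ i, ((((Fin.revPerm i : Fin n) : ℕ) : ℝ) + 1) * p i = (n : ℝ) + 1 := by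
    rw [← sum_add_distrib]
    calc _ = ∑ i, ((n : ℝ) + 1) * p i :=
          sum_congr rfl fun i _ => by rw [← add_mul, Equiv.refl_apply, Fin.revPerm_apply, hrev]
      _ = (n : ℝ) + 1 := by rw [← mul_sum, h1, mul_one]
  linarith [HG_le_sum p (Equiv.refl _), HG_le_sum p Fin.revPerm]

lemma sum_mul_HG_le_HG_sum {n : ℕ} {U : Type*} [Fintype U] {w : U → ℝ} (hw : ∀ u, 0 ≤ w u)
    (q : U → Fin n → ℝ) :
    ∑ u, w u * HG (q u) ≤ HG (fun i => ∑ u, w u * q u i) := by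
  refine le_inf' _ _ fun r _ => ?_
  calc ∑ u, w u * HG (q u)
      ≤ ∑ u, w u * ∑ i, (((r i : ℕ) : ℝ) + 1) * q u i :=
        sum_le_sum fun u _ => mul_le_mul_of_nonneg_left (HG_le_sum _ r) (hw u)
    _ = ∑ i, (((r i : ℕ) : ℝ) + 1) * ∑ u, w u * q u i := by
        simp only [mul_sum]
        rw [sum_comm]
        exact sum_congr rfl fun i _ => sum_congr rfl fun u _ => by ring

theorem multiplicative_leakage_bounds_general {n : ℕ} {U : Type*}
    [Fintype U]
    (pU : U → ℝ) (hU0 : ∀ u, 0 ≤ pU u) (hU1 : ∑ u, pU u = 1)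
    (pXgU : U → Fin n → ℝ)
    (hX0 : ∀ u i, 0 ≤ pXgU u i) (hX1 : ∀ u, ∑ i, pXgU u i = 1)
    (pX : Fin n → ℝ) (hpX : ∀ i, pX i = ∑ u, pU u * pXgU u i) :
    1 ≤ HG pX / (∑ u, pU u * HG (pXgU u)) ∧
    HG pX / (∑ u, pU u * HG (pXgU u)) ≤ ((n : ℝ) + 1) / 2 := by
  have hcond_ge : 1 ≤ ∑ u, pU u * HG (pXgU u) :=
    calc (1 : ℝ) = ∑ u, pU u * 1 := by simp [hU1]
      _ ≤ ∑ u, pU u * HG (pXgU u) :=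
        sum_le_sum fun u _ => mul_le_mul_of_nonneg_left (one_le_HG (hX0 u) (hX1 u)) (hU0 u)
  have hcond_le : ∑ u, pU u * HG (pXgU u) ≤ HG pX :=
    (funext hpX : pX = _) ▸ sum_mul_HG_le_HG_sum hU0 pXgU
  have hpX1 : ∑ i, pX i = 1 := by
    simp only [hpX]
    rw [sum_comm, ← hU1]
    exact sum_congr rfl fun u _ => by rw [← mul_sum, hX1 u, mul_one]
  exact ⟨(one_le_div (by linarith)).2 hcond_le,
    (div_le_self (by linarith) hcond_ge).trans (HG_le_card_add_one_div_two hpX1)⟩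

/-- The multiplicative guessing leakage
`GL_m(X → U) = H_G(X)/H_G(X|U)` satisfies `1 ≤ GL_m(X → U) ≤ (n+1)/2`. -/
theorem multiplicative_leakage_bounds {n : ℕ} (hn : 0 < n) {U : Type*}
    [Fintype U]
    (pU : U → ℝ) (hU0 : ∀ u, 0 ≤ pU u) (hU1 : ∑ u, pU u = 1)
    (pXgU : U → Fin n → ℝ)
    (hX0 : ∀ u i, 0 ≤ pXgU u i) (hX1 : ∀ u, ∑ i, pXgU u i = 1)
    (pX : Fin n → ℝ) (hpX : ∀ i, pX i = ∑ u, pU u * pXgU u i) :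
    1 ≤ HG pX / (∑ u, pU u * HG (pXgU u)) ∧
    HG pX / (∑ u, pU u * HG (pXgU u)) ≤ ((n : ℝ) + 1) / 2 :=
  multiplicative_leakage_bounds_general pU hU0 hU1 pXgU hX0 hX1 pX hpX
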